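/- arXiv:1210.7627 — 2 statements merged into one kernel-verified Lean document; each statement's English description precedes it below -/
import Mathlib

section
/- Let G be a simple graph on a vertex type V, let n ≥ 4 be a natural number, and let α_0, α_1, …, α_n be a walk in G such that d(α_0, α_{n−2}) = n − 2 and d(α_{n−2}, α_n) = 2. Let X be a metric space and let π : V → Set X be a coarse projection away from the single vertex α_{n−2}, and assume diam(π(α_{n−4}) ∪ π(α_n)) ≥ 4·n. Then every walk from α_0 to α_n whose length equals d(α_0, α_n) contains α_{n−2} among its vertices. -/
/-- A set-valued map `π : V → Set X` is a *coarse projection away from `W`* if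
`π v` is nonempty and bounded for every vertex `v ∉ W`, and
`diam (π u ∪ π v) ≤ 2` for every pair of adjacent vertices `u, v ∉ W`. -/
def CoarseProjection {V X : Type*} [MetricSpace X] (G : SimpleGraph V)
    (π : V → Set X) (W : Set V) : Prop :=
  (∀ v ∉ W, (π v).Nonempty ∧ Bornology.IsBounded (π v)) ∧
  (∀ u v, G.Adj u v → u ∉ W → v ∉ W → Metric.diam (π u ∪ π v) ≤ 2)

lemma diam_union_triangle {X : Type*} [MetricSpace X] {A B C : Set X}
    (hB : B.Nonempty) (hAB : Bornology.IsBounded (A ∪ B))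
    (hBC : Bornology.IsBounded (B ∪ C)) :
    Metric.diam (A ∪ C) ≤ Metric.diam (A ∪ B) + Metric.diam (B ∪ C) := by
  obtain ⟨b, hb⟩ := hB
  have key : ∀ x ∈ A ∪ C, ∀ y ∈ A ∪ C,
      dist x y ≤ Metric.diam (A ∪ B) + Metric.diam (B ∪ C) := by
    have hAx : ∀ x ∈ A, ∀ y ∈ C,
        dist x y ≤ Metric.diam (A ∪ B) + Metric.diam (B ∪ C) := by
      intro x hx y hy
      calc dist x y ≤ dist x b + dist b y := dist_triangle _ _ _
        _ ≤ _ := add_le_add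
            (Metric.dist_le_diam_of_mem hAB (Or.inl hx) (Or.inr hb))
            (Metric.dist_le_diam_of_mem hBC (Or.inl hb) (Or.inr hy))
    rintro x (hx | hx) y (hy | hy)
    · exact le_trans (Metric.dist_le_diam_of_mem hAB (Or.inl hx) (Or.inl hy))
        (le_add_of_nonneg_right Metric.diam_nonneg)
    · exact hAx x hx y hy
    · rw [dist_comm]; exact hAx y hy x hx
    · exact le_trans (Metric.dist_le_diam_of_mem hBC (Or.inr hx) (Or.inr hy))
        (le_add_of_nonneg_left Metric.diam_nonneg)
  exact Metric.diam_le_of_forall_dist_le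
    (add_nonneg Metric.diam_nonneg Metric.diam_nonneg) key

lemma walk_diam {V X : Type*} [MetricSpace X] {G : SimpleGraph V}
    {π : V → Set X} {W : Set V} (hπ : CoarseProjection G π W) :
    ∀ {u v : V} (q : G.Walk u v), (∀ x ∈ q.support, x ∉ W) →
      Metric.diam (π u ∪ π v) ≤ 2 * q.length + Metric.diam (π v) := by
  intro u v q
  induction q with
  | nil => intro _; simp
  | @cons u w v h q ih =>
    intro hsup
    have hu : u ∉ W := hsup u (by simp)
    have hw : w ∉ W := hsup w (by simp)
    have hv : v ∉ W := hsup v (by simp [SimpleGraph.Walk.end_mem_support])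
    have hsup' : ∀ x ∈ q.support, x ∉ W := fun x hx => hsup x (by simp [hx])
    have htri := diam_union_triangle (A := π u) (B := π w) (C := π v)
      ((hπ.1 w hw).1) (((hπ.1 u hu).2).union ((hπ.1 w hw).2))
      (((hπ.1 w hw).2).union ((hπ.1 v hv).2))
    have h1 : Metric.diam (π u ∪ π w) ≤ 2 := hπ.2 u w h hu hw
    have h2 := ih hsup'
    have hlen : ((SimpleGraph.Walk.cons h q).length : ℝ) = q.length + 1 := by
      simp [SimpleGraph.Walk.length_cons]
    rw [hlen] at *
    linarith
  
lemma chain_diam {V X : Type*} [MetricSpace X] {G : SimpleGraph V}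
    {π : V → Set X} {W : Set V} (hπ : CoarseProjection G π W) (β : ℕ → V) :
    ∀ m, (∀ i < m, G.Adj (β i) (β (i + 1))) → (∀ i ≤ m, β i ∉ W) →
      Metric.diam (π (β 0) ∪ π (β m)) ≤ 2 * m + Metric.diam (π (β 0)) := by
  intro m
  induction m with
  | zero => intro _ _; simp
  | succ m ih =>
    intro hadj hW
    have hadj' : ∀ i < m, G.Adj (β i) (β (i + 1)) := fun i hi => hadj i (by omega)
    have hW' : ∀ i ≤ m, β i ∉ W := fun i hi => hW i (by omega)
    have h0 : β 0 ∉ W := hW 0 (by omega)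
    have hm : β m ∉ W := hW m (by omega)
    have hm1 : β (m + 1) ∉ W := hW (m + 1) le_rfl
    have htri := diam_union_triangle (A := π (β 0)) (B := π (β m)) (C := π (β (m + 1)))
      ((hπ.1 _ hm).1) (((hπ.1 _ h0).2).union ((hπ.1 _ hm).2))
      (((hπ.1 _ hm).2).union ((hπ.1 _ hm1).2))
    have h1 : Metric.diam (π (β m) ∪ π (β (m + 1))) ≤ 2 :=
      hπ.2 _ _ (hadj m (by omega)) hm hm1
    have h2 := ih hadj' hW'
    push_cast
    push_cast at h2
    linarith

lemma exists_chain_walk {V : Type*} {G : SimpleGraph V} (β : ℕ → V) :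
    ∀ m, (∀ i < m, G.Adj (β i) (β (i + 1))) →
      ∃ q : G.Walk (β 0) (β m), q.length = m := by
  intro m
  induction m with
  | zero => intro _; exact ⟨SimpleGraph.Walk.nil, rfl⟩
  | succ m ih =>
    intro hadj
    obtain ⟨q, hq⟩ := ih (fun i hi => hadj i (by omega))
    exact ⟨q.concat (hadj m (by omega)), by simp [SimpleGraph.Walk.length_concat, hq]⟩

/-- Claim 4.1 (abstract): under the hypotheses of Proposition 4.1, every geodesic
walk from `α_0` to `α_n` contains `α_{n-2}` among its vertices. -/
theorem stmt_5 {V X : Type*} [MetricSpace X] (G : SimpleGraph V)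
    (n : ℕ) (hn : 4 ≤ n) (α : ℕ → V)
    (hwalk : ∀ i < n, G.Adj (α i) (α (i + 1)))
    (hd1 : G.dist (α 0) (α (n - 2)) = n - 2)
    (hd2 : G.dist (α (n - 2)) (α n) = 2)
    (π : V → Set X) (hπ : CoarseProjection G π {α (n - 2)})
    (hbig : 4 * (n : ℝ) ≤ Metric.diam (π (α (n - 4)) ∪ π (α n))) :
    ∀ p : G.Walk (α 0) (α n), p.length = G.dist (α 0) (α n) →
      α (n - 2) ∈ p.support := by
  intro p hp
  by_contra hmem
  obtain ⟨k, rfl⟩ : ∃ k, n = k + 4 := ⟨n - 4, by omega⟩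
  have e2 : k + 4 - 2 = k + 2 := by omega
  have e4 : k + 4 - 4 = k := by omega
  rw [e2] at hd1 hd2 hπ hmem
  rw [e4] at hbig
  -- distances along prefixes of the chain
  have hdist : ∀ i ≤ k + 4, G.dist (α 0) (α i) ≤ i := by
    intro i hi
    obtain ⟨q, hq⟩ := exists_chain_walk α i (fun j hj => hwalk j (by omega))
    exact le_trans (SimpleGraph.dist_le q) (le_of_eq hq)
  -- vertices of index ≤ k+1 avoid α (k+2)
  have hiW : ∀ i ≤ k + 1, α i ∉ ({α (k + 2)} : Set V) := by
    intro i hi hEq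
    simp only [Set.mem_singleton_iff] at hEq
    have := hdist i (by omega)
    rw [hEq, hd1] at this
    omega
  have hn4 : α (k + 4) ∉ ({α (k + 2)} : Set V) := by
    intro hEq
    simp only [Set.mem_singleton_iff] at hEq
    rw [hEq, SimpleGraph.dist_self] at hd2
    omega
  have hn3 : α (k + 3) ∉ ({α (k + 2)} : Set V) := by
    intro hEq
    simp only [Set.mem_singleton_iff] at hEq
    have hadj := hwalk (k + 2) (by omega)
    simp only [show k + 2 + 1 = k + 3 from by omega] at hadj
    exact hadj.ne' hEq
  have h0 : α 0 ∉ ({α (k + 2)} : Set V) := hiW 0 (by omega)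
  have h1 : α 1 ∉ ({α (k + 2)} : Set V) := hiW 1 (by omega)
  -- small diameters of the end projections
  have hd0 : Metric.diam (π (α 0)) ≤ 2 := by
    refine le_trans (Metric.diam_mono Set.subset_union_left
      (((hπ.1 _ h0).2).union ((hπ.1 _ h1).2))) ?_
    exact hπ.2 _ _ (hwalk 0 (by omega)) h0 h1
  have hdn : Metric.diam (π (α (k + 4))) ≤ 2 := by
    refine le_trans (Metric.diam_mono Set.subset_union_right
      (((hπ.1 _ hn3).2).union ((hπ.1 _ hn4).2))) ?_
    exact hπ.2 _ _ (hwalk (k + 3) (by omega)) hn3 hn4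
  -- prefix bound
  have hpre := chain_diam hπ α k (fun i hi => hwalk i (by omega))
    (fun i hi => hiW i (by omega))
  -- geodesic bound
  have hsup : ∀ x ∈ p.support, x ∉ ({α (k + 2)} : Set V) := by
    intro x hx hEq
    simp only [Set.mem_singleton_iff] at hEq
    exact hmem (hEq ▸ hx)
  have hgeo := walk_diam hπ p hsup
  have hplen : p.length ≤ k + 4 := by
    rw [hp]; exact hdist (k + 4) le_rfl
  have hplenR : (p.length : ℝ) ≤ k + 4 := by exact_mod_cast hplen
  -- combine with the triangle inequality for diameters
  have htri := diam_union_triangle (A := π (α k)) (B := π (α 0)) (C := π (α (k + 4)))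
    ((hπ.1 _ h0).1)
    (((hπ.1 _ (hiW k (by omega))).2).union ((hπ.1 _ h0).2))
    (((hπ.1 _ h0).2).union ((hπ.1 _ hn4).2))
  rw [Set.union_comm] at hpre
  push_cast at hbig hpre hgeo
  linarith
end

section
/- Let G be a simple graph on a vertex type V, let n ≥ 3 be a natural number, and let α_0, α_1, …, α_n be a walk in G such that d(α_0, α_{n−1}) = n − 1 and d(α_{n−2}, α_n) = 2. Let X be a metric space and let π : V → Set X be a coarse projection away from the two-element set {α_{n−2}, α_{n−1}}, and assume diam(π(α_0) ∪ π(α_n)) > 2·n. Then d(α_0, α_n) = n; that is, the walk α_0, α_1, …, α_n is a geodesic. -/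
/-- From a walk, there is a walk between the `i`-th and `(i+k)`-th vertices of
length at most `k`. -/
lemma walk_segment {V : Type*} {G : SimpleGraph V} {u v : V} (p : G.Walk u v) (i k : ℕ) :
    ∃ q : G.Walk (p.getVert i) (p.getVert (i + k)), q.length ≤ k := by
  induction k with
  | zero => exact ⟨SimpleGraph.Walk.nil, by simp⟩
  | succ k ih =>
    obtain ⟨q, hq⟩ := ih
    by_cases h : i + k < p.length
    · exact ⟨q.concat (p.adj_getVert_succ h), by
        rw [SimpleGraph.Walk.length_concat]; omega⟩
    · have e : p.getVert (i + k) = p.getVert (i + (k + 1)) := by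
        rw [p.getVert_of_length_le (by omega), p.getVert_of_length_le (by omega)]
      exact ⟨q.copy rfl e, by rw [SimpleGraph.Walk.length_copy]; omega⟩

/-- Chain bound: if consecutive unions have diameter at most 2 along a chain of
length `m ≥ 1` of nonempty bounded sets, the union of the endpoints has diameter
at most `2 m`. -/
lemma chain_diam_s8 {X : Type*} [MetricSpace X] (f : ℕ → Set X) (m : ℕ) (hm : 1 ≤ m)
    (hne : ∀ i ≤ m, (f i).Nonempty) (hb : ∀ i ≤ m, Bornology.IsBounded (f i))
    (hstep : ∀ i < m, Metric.diam (f i ∪ f (i + 1)) ≤ 2) :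
    Metric.diam (f 0 ∪ f m) ≤ 2 * m := by
  have key : ∀ j, 1 ≤ j → j ≤ m → ∀ x ∈ f 0, ∀ y ∈ f j, dist x y ≤ 2 * (j : ℝ) := by
    intro j
    induction j with
    | zero => omega
    | succ j ih =>
      intro _ hjm x hx y hy
      by_cases hj : j = 0
      · subst hj
        have h1 : dist x y ≤ Metric.diam (f 0 ∪ f 1) :=
          Metric.dist_le_diam_of_mem ((hb 0 (by omega)).union (hb 1 hjm))
            (Or.inl hx) (Or.inr hy)
        have h2 := hstep 0 (by omega)
        push_cast
        linarith
      · obtain ⟨z, hz⟩ := hne j (by omega)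
        have h1 := ih (by omega) (by omega) x hx z hz
        have h2 : dist z y ≤ 2 :=
          le_trans (Metric.dist_le_diam_of_mem ((hb j (by omega)).union (hb (j+1) hjm))
            (Or.inl hz) (Or.inr hy)) (hstep j (by omega))
        have := dist_triangle x z y
        push_cast
        push_cast at h1
        linarith
  have two_le : (2 : ℝ) ≤ 2 * m := by
    have : (1 : ℝ) ≤ (m : ℝ) := by exact_mod_cast hm
    linarith
  apply Metric.diam_le_of_forall_dist_le (by positivity)
  intro x hx y hy
  rcases hx with hx | hx <;> rcases hy with hy | hy
  · refine le_trans (le_trans (Metric.dist_le_diam_of_mem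
      ((hb 0 (by omega)).union (hb 1 hm)) (Or.inl hx) (Or.inl hy)) (hstep 0 hm)) two_le
  · exact key m hm le_rfl x hx y hy
  · rw [dist_comm]; exact key m hm le_rfl y hy x hx
  · have e : m - 1 + 1 = m := by omega
    have h2 := hstep (m - 1) (by omega)
    rw [e] at h2
    refine le_trans (le_trans (Metric.dist_le_diam_of_mem
      ((hb (m-1) (by omega)).union (hb m le_rfl)) (Or.inr hx) (Or.inr hy)) h2) two_le

/-- Proposition 4.2 (abstract): the walk `α_0, …, α_n` is a geodesic,
i.e. `d(α_0, α_n) = n`. -/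
theorem stmt_8 {V X : Type*} [MetricSpace X] (G : SimpleGraph V)
    (n : ℕ) (hn : 3 ≤ n) (α : ℕ → V)
    (hwalk : ∀ i < n, G.Adj (α i) (α (i + 1)))
    (hd1 : G.dist (α 0) (α (n - 1)) = n - 1)
    (hd2 : G.dist (α (n - 2)) (α n) = 2)
    (π : V → Set X)
    (hπ : CoarseProjection G π ({α (n - 2), α (n - 1)} : Set V))
    (hbig : 2 * (n : ℝ) < Metric.diam (π (α 0) ∪ π (α n))) :
    G.dist (α 0) (α n) = n := by
  -- adjacency of the last two edges
  have adj2 : G.Adj (α (n - 2)) (α (n - 1)) := by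
    have := hwalk (n - 2) (by omega)
    rwa [show n - 2 + 1 = n - 1 by omega] at this
  have adj1 : G.Adj (α (n - 1)) (α n) := by
    have := hwalk (n - 1) (by omega)
    rwa [show n - 1 + 1 = n by omega] at this
  -- geodesic walk from α 0 to α (n-1)
  have hr1 : G.Reachable (α 0) (α (n - 1)) :=
    SimpleGraph.Reachable.of_dist_ne_zero (by rw [hd1]; omega)
  obtain ⟨p0, hp0⟩ := hr1.exists_walk_length_eq_dist
  -- upper bound
  have hub : G.dist (α 0) (α n) ≤ n := by
    have := SimpleGraph.dist_le (p0.concat adj1)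
    rw [SimpleGraph.Walk.length_concat, hp0, hd1] at this
    omega
  -- distance from α (n-2) to α (n-1) is at most 1
  have hd21 : G.dist (α (n - 2)) (α (n - 1)) ≤ 1 := by
    have := SimpleGraph.dist_le adj2.toWalk
    simpa using this
  by_contra hne
  set m := G.dist (α 0) (α n) with hm
  have hmn : m < n := lt_of_le_of_ne hub hne
  -- geodesic walk from α 0 to α n
  have hr : G.Reachable (α 0) (α n) := ⟨p0.concat adj1⟩
  obtain ⟨p, hp⟩ := hr.exists_walk_length_eq_dist
  rw [← hm] at hp
  -- lower bound m ≥ n - 2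
  have hlb : n - 1 ≤ m + 1 := by
    have := SimpleGraph.dist_le (p.concat adj1.symm)
    rw [SimpleGraph.Walk.length_concat, hp, hd1] at this
    omega
  have hm1 : 1 ≤ m := by omega
  by_cases hW : ∃ i ≤ m, p.getVert i ∈ ({α (n - 2), α (n - 1)} : Set V)
  · obtain ⟨i, him, hiW⟩ := hW
    -- walks along segments of p
    obtain ⟨q, hq⟩ := walk_segment p 0 i
    obtain ⟨r, hr2⟩ := walk_segment p i (m - i)
    have hend : p.getVert (i + (m - i)) = α n := by
      rw [show i + (m - i) = m by omega, show m = p.length from hp.symm,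
        SimpleGraph.Walk.getVert_length]
    rcases hiW with hiW | hiW
    · -- p.getVert i = α (n - 2)
      have e1 : p.getVert (0 + i) = α (n - 2) := by rw [Nat.zero_add]; exact hiW
      have h1 : G.dist (α 0) (α (n - 1)) ≤ i + 1 := by
        have := SimpleGraph.dist_le ((q.copy p.getVert_zero e1).concat adj2)
        rw [SimpleGraph.Walk.length_concat, SimpleGraph.Walk.length_copy] at this
        omega
      have h2 : (2 : ℕ) ≤ m - i := by
        have := SimpleGraph.dist_le (r.copy hiW hend)
        rw [SimpleGraph.Walk.length_copy, hd2] at this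
        omega
      rw [hd1] at h1
      omega
    · -- p.getVert i = α (n - 1)
      simp only [Set.mem_singleton_iff] at hiW
      have e1 : p.getVert (0 + i) = α (n - 1) := by rw [Nat.zero_add]; exact hiW
      have h1 : n - 1 ≤ i := by
        have := SimpleGraph.dist_le (q.copy p.getVert_zero e1)
        rw [SimpleGraph.Walk.length_copy, hd1] at this
        omega
      have hieq : i = m := by omega
      have hmend : p.getVert i = α n := by
        rw [hieq, show m = p.length from hp.symm, SimpleGraph.Walk.getVert_length]
      have : G.dist (α (n - 2)) (α n) ≤ 1 := by
        rw [← hmend, hiW]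
        exact hd21
      omega
  · push_neg at hW
    have hchain := chain_diam_s8 (fun i => π (p.getVert i)) m hm1
      (fun i hi => (hπ.1 _ (hW i hi)).1)
      (fun i hi => (hπ.1 _ (hW i hi)).2)
      (fun i hi => hπ.2 _ _ (p.adj_getVert_succ (by omega)) (hW i (by omega))
        (hW (i + 1) (by omega)))
    have e0 : p.getVert 0 = α 0 := p.getVert_zero
    have em : p.getVert m = α n := by
      rw [show m = p.length from hp.symm, SimpleGraph.Walk.getVert_length]
    simp only [e0, em] at hchain
    have : 2 * (m : ℝ) < 2 * (n : ℝ) := by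
      have : (m : ℝ) < n := by exact_mod_cast hmn
      linarith
    linarith
end
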